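/- Let d ≥ 0 and let (a₀,a₁,a₂) ∈ H_{d+1}³ satisfy the Euler relation a₀z₀ + a₁z₁ + a₂z₂ = 0. If both dehomogenizations a₀(x,y,1) and a₁(x,y,1) vanish to order at least d+1 at the origin (i.e., the foliation has a singularity of the maximal possible order d+1 at p = [0:0:1]), then a₂ = 0 and there exists a homogeneous polynomial f ∈ ℂ[x,y] of degree d such that a₀(x,y,1) = y·f and a₁(x,y,1) = −x·f. In particular a singularity of order d+1 of a degree-d foliation is automatically dicritical. -/

import Mathlib

open MvPolynomial

/-- Dehomogenization `p(z₀,z₁,z₂) ↦ p(x,y,1)` as an algebra map. -/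
noncomputable def dehom : MvPolynomial (Fin 3) ℂ →ₐ[ℂ] MvPolynomial (Fin 2) ℂ :=
  aeval ![X 0, X 1, 1]

/-!
Write `Aᵢ = aᵢ(x,y,1)`. Dehomogenizing Euler's relation gives `A₀x + A₁y + A₂ = 0`. The order
hypothesis makes `A₀` and `A₁` homogeneous of degree `d+1`, so `A₀x + A₁y` is homogeneous of
degree `d+2`, whereas `A₂` has degree at most `d+1`; hence both vanish, and `a₂ = 0` because a
homogeneous polynomial vanishing on the chart `z₂ = 1` is zero. Finally `A₀x = -A₁y` with `x`, `y`
coprime forces `A₀ = y f` and `A₁ = -x f`.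
-/

namespace MvPolynomial

section CommSemiring

variable {σ τ R : Type*} [CommSemiring R]

theorem isHomogeneous_iff_degree {p : MvPolynomial σ R} {n : ℕ} :
    p.IsHomogeneous n ↔ ∀ ⦃m : σ →₀ ℕ⦄, coeff m p ≠ 0 → m.degree = n := by
  simp only [IsHomogeneous, IsWeightedHomogeneous, Finsupp.degree_eq_weight_one, Pi.one_def]

theorem totalDegree_aeval_le {g : σ → MvPolynomial τ R} (hg : ∀ i, (g i).totalDegree ≤ 1)
    (p : MvPolynomial σ R) : (aeval g p).totalDegree ≤ p.totalDegree := by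
  conv_lhs => rw [p.as_sum, map_sum]
  refine totalDegree_finsetSum_le fun m hm => ?_
  rw [aeval_monomial, algebraMap_eq]
  refine (totalDegree_mul _ _).trans ?_
  rw [totalDegree_C, zero_add]
  refine (totalDegree_finsetProd _ _).trans <| (Finset.sum_le_sum fun i _ => ?_).trans
    (le_totalDegree hm)
  calc (g i ^ m i).totalDegree ≤ m i * (g i).totalDegree := totalDegree_pow _ _
    _ ≤ m i := by simpa using Nat.mul_le_mul_left (m i) (hg i)

theorem isHomogeneous_of_totalDegree_le {p : MvPolynomial σ R} {n : ℕ} (hp : p.totalDegree ≤ n)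
    (hlow : ∀ k < n, homogeneousComponent k p = 0) : p.IsHomogeneous n := by
  refine isHomogeneous_iff_degree.mpr fun m hm => ?_
  have hle : m.degree ≤ n := (le_totalDegree (mem_support_iff.mpr hm)).trans hp
  refine hle.eq_or_lt.resolve_right fun hlt => hm ?_
  simpa [coeff_homogeneousComponent] using congrArg (coeff m) (hlow _ hlt)

theorem IsHomogeneous.of_X_mul {f : MvPolynomial σ R} {i : σ} {n : ℕ}
    (h : (X i * f).IsHomogeneous (n + 1)) : f.IsHomogeneous n := by
  refine isHomogeneous_iff_degree.mpr fun m hm => ?_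
  have := isHomogeneous_iff_degree.mp h (m := Finsupp.single i 1 + m) (by rwa [coeff_X_mul])
  rw [map_add, Finsupp.degree_single] at this
  omega

theorem IsHomogeneous.eval_smul {p : MvPolynomial σ R} {n : ℕ} (hp : p.IsHomogeneous n)
    (t : R) (r : σ → R) : eval (t • r) p = t ^ n * eval r p := by
  rw [eval_eq, eval_eq, Finset.mul_sum]
  refine Finset.sum_congr rfl fun m hm => ?_
  have hdeg : ∑ i ∈ m.support, m i = n := (hp.degree_eq_sum_deg_support hm).symm
  simp_rw [Pi.smul_apply, smul_eq_mul, mul_pow, Finset.prod_mul_distrib,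
    Finset.prod_pow_eq_pow_sum, hdeg]
  ring

theorem IsHomogeneous.eq_zero_of_totalDegree_lt {p : MvPolynomial σ R} {n : ℕ}
    (hp : p.IsHomogeneous n) (hlt : p.totalDegree < n) : p = 0 := by
  by_contra hne
  exact (hp.totalDegree hne).not_lt hlt

end CommSemiring

theorem exists_eq_X_mul_of_mul_X_add_mul_X_eq_zero {σ R : Type*} [CommRing R] [IsDomain R]
    {i j : σ} (hij : i ≠ j) {p q : MvPolynomial σ R} (h : p * X i + q * X j = 0) :
    ∃ f, p = X j * f ∧ q = -(X i * f) := by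
  have hdvd : X j ∣ p * X i := ⟨-q, by linear_combination h⟩
  obtain ⟨f, hf⟩ := (X_dvd_mul_iff.mp hdvd).resolve_right (by simpa using hij.symm)
  refine ⟨f, hf, ?_⟩
  have : X j * (q + X i * f) = 0 := by linear_combination h - X i * hf
  linear_combination (mul_eq_zero.mp this).resolve_left (X_ne_zero j)

end MvPolynomial

theorem dehom_X (i : Fin 3) : dehom (X i) = ![X 0, X 1, 1] i :=
  aeval_X _ _

theorem totalDegree_dehom_le (p : MvPolynomial (Fin 3) ℂ) :
    (dehom p).totalDegree ≤ p.totalDegree :=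
  totalDegree_aeval_le (fun i => by fin_cases i <;> simp) p

theorem eval_dehom (v : Fin 2 → ℂ) (p : MvPolynomial (Fin 3) ℂ) :
    eval v (dehom p) = eval ![v 0, v 1, 1] p := by
  rw [← coe_aeval_eq_eval, ← coe_aeval_eq_eval]
  change ((aeval v).comp (aeval ![X 0, X 1, 1])) p = _
  have hvals : (fun i => aeval v (![X 0, X 1, 1] i : MvPolynomial (Fin 2) ℂ)) = ![v 0, v 1, 1] := by
    funext i
    fin_cases i <;> simp
  rw [comp_aeval, hvals]
  rfl

theorem eq_zero_of_dehom_eq_zero {p : MvPolynomial (Fin 3) ℂ} {n : ℕ} (hp : p.IsHomogeneous n)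
    (h : dehom p = 0) : p = 0 := by
  -- `p * z₂` vanishes on `z₂ = 0` trivially and elsewhere by scaling into the chart `z₂ = 1`.
  suffices p * X 2 = 0 from (mul_eq_zero.mp this).resolve_right (X_ne_zero 2)
  refine (hp.mul (isHomogeneous_X ℂ 2)).eq_zero_of_forall_eval_eq_zero fun r => ?_
  rw [eval_mul, eval_X]
  rcases eq_or_ne (r 2) 0 with hr | hr
  · rw [hr, mul_zero]
  have hr_smul : r = r 2 • ![r 0 / r 2, r 1 / r 2, 1] := by
    funext i
    fin_cases i <;> simp [field]
  have hchart : eval ![r 0 / r 2, r 1 / r 2, 1] p = 0 := by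
    simpa [h] using (eval_dehom ![r 0 / r 2, r 1 / r 2] p).symm
  rw [hr_smul, hp.eval_smul, hchart, mul_zero, zero_mul]

/-- A singularity of the maximal order `d+1` of a degree-`d` foliation is
automatically dicritical: if `(a₀,a₁,a₂)` are homogeneous of degree `d+1`
with `a₀z₀ + a₁z₁ + a₂z₂ = 0` and both `a₀(x,y,1)`, `a₁(x,y,1)` vanish to
order at least `d+1` at the origin, then `a₂ = 0` and
`a₀(x,y,1) = y·f`, `a₁(x,y,1) = −x·f` for some homogeneous `f` of degree `d`. -/
theorem maximal_order_singularity_dicritical (d : ℕ)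
    (a : Fin 3 → MvPolynomial (Fin 3) ℂ)
    (hhom : ∀ i, (a i).IsHomogeneous (d + 1))
    (heuler : ∑ i : Fin 3, a i * X i = 0)
    (h0 : ∀ n < d + 1, homogeneousComponent n (dehom (a 0)) = 0)
    (h1 : ∀ n < d + 1, homogeneousComponent n (dehom (a 1)) = 0) :
    a 2 = 0 ∧ ∃ f : MvPolynomial (Fin 2) ℂ, f.IsHomogeneous d ∧
      dehom (a 0) = X 1 * f ∧ dehom (a 1) = -(X 0 * f) := by
  have hdeg (i : Fin 3) : (dehom (a i)).totalDegree ≤ d + 1 :=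
    (totalDegree_dehom_le _).trans (hhom i).totalDegree_le
  have hA0 := isHomogeneous_of_totalDegree_le (hdeg 0) h0
  have hA1 := isHomogeneous_of_totalDegree_le (hdeg 1) h1
  have heuler' : dehom (a 0) * X 0 + dehom (a 1) * X 1 + dehom (a 2) = 0 := by
    simpa [Fin.sum_univ_three, dehom_X] using congrArg dehom heuler
  have htop : dehom (a 0) * X 0 + dehom (a 1) * X 1 = 0 := by
    have hhom_top := (hA0.mul (isHomogeneous_X ℂ 0)).add (hA1.mul (isHomogeneous_X ℂ 1))
    refine hhom_top.eq_zero_of_totalDegree_lt ?_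
    rw [eq_neg_of_add_eq_zero_left heuler', totalDegree_neg]
    exact Nat.lt_succ_of_le (hdeg 2)
  have ha2 : a 2 = 0 := eq_zero_of_dehom_eq_zero (hhom 2) (by linear_combination heuler' - htop)
  obtain ⟨f, hf0, hf1⟩ := exists_eq_X_mul_of_mul_X_add_mul_X_eq_zero (by decide) htop
  exact ⟨ha2, f, (hf0 ▸ hA0).of_X_mul, hf0, hf1⟩
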